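/- arXiv:0711.2114 — 3 statements merged into one kernel-verified Lean document; each statement's English description precedes it below -/
import Mathlib

section
/- The Möbius function of the lattice Q(N) is given by μ((A,A'),(B,B')) = (-1)^{|B\A| + |A'\B'|} if (A,A') ⊑ (B,B') and A'∩B = ∅, and μ((A,A'),(B,B')) = 0 otherwise. -/
/-! For fixed `p = (A, A')` the map `q ↦ μ p q` is pinned down by `μ p p = 1`, its vanishing off
`p ⊑ q`, and the recursion, so it suffices that the proposed formula sums to zero over
every interval `[p, q]` with `p ≠ q`. On `[p, q]` that formula is supported on the pairs `(T, T')`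
with `A ⊆ T ⊆ B \ A'` and `B' ⊆ T' ⊆ A'`, where it is `(-1)^|T \ A| · (-1)^|A' \ T'|`. The interval
sum is therefore a product of two alternating sums over Boolean intervals, which vanishes unless
both intervals are single points, that is, unless `p = q`. -/

open Finset

namespace Finset

variable {α : Type*} [DecidableEq α] {s t : Finset α}

theorem sum_Icc_neg_one_pow_card_sdiff_left (h : s ⊆ t) :
    ∑ u ∈ Icc s t, (-1 : ℤ) ^ #(u \ s) = if s = t then 1 else 0 := by
  have : ∑ u ∈ Icc s t, (-1 : ℤ) ^ #(u \ s) = ∑ v ∈ (t \ s).powerset, (-1 : ℤ) ^ #v := by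
    refine sum_nbij' (· \ s) (s ∪ ·) ?_ ?_ ?_ ?_ ?_ <;> intro u hu
    · simp only [mem_Icc, mem_powerset] at hu ⊢
      exact sdiff_subset_sdiff hu.2 subset_rfl
    · simp only [mem_Icc, mem_powerset] at hu ⊢
      exact ⟨subset_union_left, union_subset h (hu.trans sdiff_subset)⟩
    · simp only [mem_Icc] at hu
      exact union_sdiff_of_subset hu.1
    · simp only [mem_powerset] at hu
      exact union_sdiff_cancel_left (disjoint_of_subset_right hu disjoint_sdiff)
    · rfl
  simp only [this, sum_powerset_neg_one_pow_card, sdiff_eq_empty_iff_subset, h.ge_iff_eq]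

theorem sum_Icc_neg_one_pow_card_sdiff_right (h : s ⊆ t) :
    ∑ u ∈ Icc s t, (-1 : ℤ) ^ #(t \ u) = if s = t then 1 else 0 := by
  have : ∑ u ∈ Icc s t, (-1 : ℤ) ^ #(t \ u) = ∑ v ∈ (t \ s).powerset, (-1 : ℤ) ^ #v := by
    refine sum_nbij' (t \ ·) (t \ ·) ?_ ?_ ?_ ?_ ?_ <;> intro u hu
    · simp only [mem_Icc, mem_powerset] at hu ⊢
      exact sdiff_subset_sdiff subset_rfl hu.1
    · simp only [mem_Icc, mem_powerset] at hu ⊢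
      exact ⟨subset_sdiff.mpr ⟨h, disjoint_of_subset_right hu disjoint_sdiff⟩, sdiff_subset⟩
    · simp only [mem_Icc] at hu
      exact sdiff_sdiff_eq_self hu.2
    · simp only [mem_powerset] at hu
      exact sdiff_sdiff_eq_self (hu.trans sdiff_subset)
    · rfl
  simp only [this, sum_powerset_neg_one_pow_card, sdiff_eq_empty_iff_subset, h.ge_iff_eq]

end Finset

section QLattice

variable {V : Type*} [DecidableEq V]

def qMobius (p q : Finset V × Finset V) : ℤ :=
  if (p.1 ⊆ q.1 ∧ q.2 ⊆ p.2) ∧ p.2 ∩ q.1 = ∅ then (-1) ^ (#(q.1 \ p.1) + #(p.2 \ q.2)) else 0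

theorem qMobius_self {p : Finset V × Finset V} (hp : Disjoint p.1 p.2) : qMobius p p = 1 := by
  simp [qMobius, inter_comm, disjoint_iff_inter_eq_empty.mp hp]

theorem qMobius_of_not_le {p q : Finset V × Finset V} (h : ¬(p.1 ⊆ q.1 ∧ q.2 ⊆ p.2)) :
    qMobius p q = 0 :=
  if_neg fun h' => h h'.1

variable [Fintype V]

def qIcc (p q : Finset V × Finset V) : Finset (Finset V × Finset V) :=
  {t | Disjoint t.1 t.2 ∧ (p.1 ⊆ t.1 ∧ t.2 ⊆ p.2) ∧ (t.1 ⊆ q.1 ∧ q.2 ⊆ t.2)}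

theorem sum_qIcc_qMobius_eq_mul (p q : Finset V × Finset V) :
    ∑ t ∈ qIcc p q, qMobius p t =
      (∑ u ∈ Icc p.1 (q.1 \ p.2), (-1 : ℤ) ^ #(u \ p.1)) *
        ∑ v ∈ Icc q.2 p.2, (-1) ^ #(p.2 \ v) := by
  have mem_product_iff : ∀ t, t ∈ Icc p.1 (q.1 \ p.2) ×ˢ Icc q.2 p.2 ↔
      t ∈ qIcc p q ∧ p.2 ∩ t.1 = ∅ := by
    intro t
    simp only [qIcc, mem_filter, mem_univ, true_and, mem_product, mem_Icc, subset_sdiff,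
      ← disjoint_iff_inter_eq_empty]
    constructor
    · rintro ⟨⟨h1, h2, h3⟩, h4, h5⟩
      exact ⟨⟨h3.mono_right h5, ⟨h1, h5⟩, h2, h4⟩, h3.symm⟩
    · rintro ⟨⟨-, ⟨h1, h5⟩, h2, h4⟩, h3⟩
      exact ⟨⟨h1, h2, h3.symm⟩, h4, h5⟩
  calc ∑ t ∈ qIcc p q, qMobius p t
      = ∑ t ∈ Icc p.1 (q.1 \ p.2) ×ˢ Icc q.2 p.2, qMobius p t := by
        refine (sum_subset (fun t ht => ((mem_product_iff t).1 ht).1) fun t ht hnot => ?_).symm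
        exact if_neg fun h => hnot ((mem_product_iff t).2 ⟨ht, h.2⟩)
    _ = ∑ t ∈ Icc p.1 (q.1 \ p.2) ×ˢ Icc q.2 p.2,
          (-1 : ℤ) ^ #(t.1 \ p.1) * (-1) ^ #(p.2 \ t.2) := by
        refine sum_congr rfl fun t ht => ?_
        obtain ⟨hq, hd⟩ := (mem_product_iff t).1 ht
        simp only [qIcc, mem_filter, mem_univ, true_and] at hq
        rw [qMobius, if_pos ⟨hq.2.1, hd⟩, pow_add]
    _ = _ := by rw [sum_mul_sum, sum_product]

theorem sum_qIcc_qMobius {p q : Finset V × Finset V} (hp : Disjoint p.1 p.2)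
    (hq : Disjoint q.1 q.2) (hpq : p.1 ⊆ q.1 ∧ q.2 ⊆ p.2) :
    ∑ t ∈ qIcc p q, qMobius p t = if p = q then 1 else 0 := by
  rw [sum_qIcc_qMobius_eq_mul, sum_Icc_neg_one_pow_card_sdiff_left (subset_sdiff.mpr ⟨hpq.1, hp⟩),
    sum_Icc_neg_one_pow_card_sdiff_right hpq.2, ite_zero_mul_ite_zero, one_mul]
  refine if_congr ⟨fun ⟨h1, h2⟩ => Prod.ext ?_ h2.symm, ?_⟩ rfl rfl
  · rw [h1, ← h2, hq.sdiff_eq_left]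
  · rintro rfl
    exact ⟨hp.sdiff_eq_left.symm, rfl⟩

theorem card_add_card_compl_lt {t q : Finset V × Finset V} (h1 : t.1 ⊆ q.1) (h2 : q.2 ⊆ t.2)
    (hne : t ≠ q) : #t.1 + #t.2ᶜ < #q.1 + #q.2ᶜ := by
  have h2' : t.2ᶜ ⊆ q.2ᶜ := compl_subset_compl.mpr h2
  obtain e1 | s1 := h1.eq_or_ssubset
  · obtain e2 | s2 := h2'.eq_or_ssubset
    · exact absurd (Prod.ext e1 (compl_injective e2)) hne
    · rw [e1]
      exact Nat.add_lt_add_left (card_lt_card s2) _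
  · exact Nat.add_lt_add_of_lt_of_le (card_lt_card s1) (card_le_card h2')

theorem eq_qMobius_of_recursion {p : Finset V × Finset V} (hp : Disjoint p.1 p.2)
    (f : Finset V × Finset V → ℤ) (h_self : f p = 1)
    (h_rec : ∀ q, Disjoint q.1 q.2 → (p.1 ⊆ q.1 ∧ q.2 ⊆ p.2) → p ≠ q →
      f q = -∑ t ∈ (qIcc p q).erase q, f t)
    (h_zero : ∀ q, Disjoint q.1 q.2 → ¬(p.1 ⊆ q.1 ∧ q.2 ⊆ p.2) → f q = 0)
    (q : Finset V × Finset V) (hq : Disjoint q.1 q.2) : f q = qMobius p q := by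
  by_cases hpq : p.1 ⊆ q.1 ∧ q.2 ⊆ p.2
  swap
  · rw [h_zero q hq hpq, qMobius_of_not_le hpq]
  obtain rfl | hne := eq_or_ne p q
  · rw [h_self, qMobius_self hp]
  have hq_mem : q ∈ qIcc p q := by
    simp only [qIcc, mem_filter, mem_univ, true_and]
    exact ⟨hq, hpq, subset_rfl, subset_rfl⟩
  have ih : ∀ t ∈ (qIcc p q).erase q, f t = qMobius p t := fun t ht =>
    eq_qMobius_of_recursion hp f h_self h_rec h_zero t (by
      simp only [qIcc, mem_erase, mem_filter, mem_univ, true_and] at ht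
      exact ht.2.1)
  have hsum := sum_erase_add _ (qMobius p) hq_mem
  rw [sum_qIcc_qMobius hp hq hpq, if_neg hne] at hsum
  rw [h_rec q hq hpq hne, sum_congr rfl ih]
  linarith
termination_by #q.1 + #q.2ᶜ
decreasing_by
  simp only [qIcc, mem_erase, mem_filter, mem_univ, true_and] at ht
  exact card_add_card_compl_lt ht.2.2.2.1 ht.2.2.2.2 ht.1

end QLattice

/-- the Möbius function of Q(N) is
μ((A,A'),(B,B')) = (-1)^{|B\A|+|A'\B'|} if (A,A') ⊑ (B,B') and A'∩B = ∅, else 0. -/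
theorem stmt_8 (V : Type*) [Fintype V] [DecidableEq V]
    (μ : Finset V × Finset V → Finset V × Finset V → ℤ)
    (hrefl : ∀ p : Finset V × Finset V, Disjoint p.1 p.2 → μ p p = 1)
    (hrec : ∀ p q : Finset V × Finset V, Disjoint p.1 p.2 → Disjoint q.1 q.2 →
      (p.1 ⊆ q.1 ∧ q.2 ⊆ p.2) → p ≠ q →
      μ p q = -∑ t ∈ univ.filter (fun t : Finset V × Finset V =>
        Disjoint t.1 t.2 ∧ (p.1 ⊆ t.1 ∧ t.2 ⊆ p.2) ∧ (t.1 ⊆ q.1 ∧ q.2 ⊆ t.2) ∧ t ≠ q),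
        μ p t)
    (hzero : ∀ p q : Finset V × Finset V, Disjoint p.1 p.2 → Disjoint q.1 q.2 →
      ¬(p.1 ⊆ q.1 ∧ q.2 ⊆ p.2) → μ p q = 0) :
    ∀ A A' B B' : Finset V, Disjoint A A' → Disjoint B B' →
      μ (A, A') (B, B') =
        if (A ⊆ B ∧ B' ⊆ A') ∧ A' ∩ B = ∅
        then (-1 : ℤ) ^ ((B \ A).card + (A' \ B').card) else 0 := by
  intro A A' B B' hA hB
  have filter_eq_erase : ∀ p q : Finset V × Finset V,
      univ.filter (fun t : Finset V × Finset V =>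
        Disjoint t.1 t.2 ∧ (p.1 ⊆ t.1 ∧ t.2 ⊆ p.2) ∧ (t.1 ⊆ q.1 ∧ q.2 ⊆ t.2) ∧ t ≠ q) =
      (qIcc p q).erase q := by
    intro p q
    ext t
    simp only [qIcc, mem_filter, mem_erase, mem_univ, true_and]
    tauto
  refine eq_qMobius_of_recursion hA (μ (A, A')) (hrefl _ hA) (fun q hq hpq hne => ?_)
    (fun q hq => hzero _ q hA hq) (B, B') hB
  rw [hrec _ q hA hq hpq hne, filter_eq_erase]
end

section
/- Let v be a CPT-type bi-capacity, v(A,B) = ν₁(A) - ν₂(B) for capacities ν₁, ν₂ on N. Then the Möbius transform m of v on Q(N) satisfies: m(A, Aᶜ) = m^{ν₁}(A) for all nonempty A ⊆ N; m(∅,B) = m^{conj(ν₂)}(Bᶜ) for all B ⊊ N, where conj(ν₂)(A) = ν₂(N) - ν₂(Aᶜ); m(∅,N) = -ν₂(N); and m(A,B) = 0 whenever A ≠ ∅ and B ≠ Aᶜ. -/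
/-!
On a product `f B * g B'` the bi-capacity Möbius transform factorises as `m^f(A)` times the
Möbius transform of `g` on the interval `[A', Aᶜ]`, and for a constant function either factor is
an alternating binomial sum, i.e. a Kronecker delta. Writing `v(B, B') = ν₁ B * 1 - 1 * ν₂ B'`
gives every case; for `A = ∅` the interval `[B, N]` is carried onto `[∅, Bᶜ]` by complementation,
which is where the conjugate capacity comes from.
-/

open Finset

/-- The Möbius transform of a function on Q(N). -/
def biMobius {V : Type*} [Fintype V] [DecidableEq V]
    (v : Finset V × Finset V → ℝ) (A A' : Finset V) : ℝ :=
  ∑ B ∈ A.powerset, ∑ B' ∈ (Aᶜ).powerset.filter (fun B' => A' ⊆ B'),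
    (-1 : ℝ) ^ ((A \ B).card + (B' \ A').card) * v (B, B')

/-- The classical Möbius transform of a set function. -/
def setMobius {V : Type*} [DecidableEq V] (ν : Finset V → ℝ) (A : Finset V) : ℝ :=
  ∑ B ∈ A.powerset, (-1 : ℝ) ^ ((A \ B).card) * ν B

def intervalMobius {V : Type*} [DecidableEq V] (g : Finset V → ℝ) (s t : Finset V) : ℝ :=
  ∑ u ∈ Icc s t, (-1 : ℝ) ^ #(u \ s) * g u

section

variable {V : Type*} [DecidableEq V]

theorem Finset.sum_powerset_sdiff {M : Type*} [AddCommMonoid M] (s : Finset V)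
    (f : Finset V → M) : ∑ t ∈ s.powerset, f (s \ t) = ∑ t ∈ s.powerset, f t :=
  sum_nbij' (s \ ·) (s \ ·) (fun _ _ => mem_powerset.2 sdiff_subset)
    (fun _ _ => mem_powerset.2 sdiff_subset)
    (fun _ ht => sdiff_sdiff_eq_self (mem_powerset.1 ht))
    (fun _ ht => sdiff_sdiff_eq_self (mem_powerset.1 ht)) (fun _ _ => rfl)

theorem Finset.sum_Icc_eq_sum_powerset_sdiff {M : Type*} [AddCommMonoid M] {s t : Finset V}
    (h : s ⊆ t) (f : Finset V → M) :
    ∑ u ∈ Icc s t, f u = ∑ u ∈ (t \ s).powerset, f (s ∪ u) := by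
  rw [Icc_eq_image_powerset h, sum_image]
  intro u hu u' hu' huu'
  have hd : Disjoint u s := disjoint_sdiff_self_left.mono_left (mem_powerset.1 hu)
  have hd' : Disjoint u' s := disjoint_sdiff_self_left.mono_left (mem_powerset.1 hu')
  simpa [union_sdiff_left, hd.sdiff_eq_left, hd'.sdiff_eq_left] using
    congrArg (· \ s) huu'

theorem sum_powerset_neg_one_pow_card_real (s : Finset V) :
    ∑ t ∈ s.powerset, (-1 : ℝ) ^ #t = if s = ∅ then 1 else 0 := by
  exact_mod_cast congrArg (Int.cast : ℤ → ℝ) sum_powerset_neg_one_pow_card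

theorem setMobius_sub (f g : Finset V → ℝ) (A : Finset V) :
    setMobius (fun B => f B - g B) A = setMobius f A - setMobius g A := by
  simp only [setMobius, mul_sub, sum_sub_distrib]

theorem setMobius_const (c : ℝ) (A : Finset V) :
    setMobius (fun _ => c) A = if A = ∅ then c else 0 := by
  rw [setMobius, ← sum_mul, sum_powerset_sdiff A (fun t => (-1 : ℝ) ^ #t),
    sum_powerset_neg_one_pow_card_real]
  split_ifs <;> simp

theorem setMobius_empty (f : Finset V → ℝ) : setMobius f ∅ = f ∅ := by
  simp [setMobius]

theorem intervalMobius_self (g : Finset V → ℝ) (s : Finset V) : intervalMobius g s s = g s := by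
  simp [intervalMobius]

theorem intervalMobius_const (c : ℝ) (s t : Finset V) :
    intervalMobius (fun _ => c) s t = if s = t then c else 0 := by
  by_cases hst : s ⊆ t
  · rw [intervalMobius, ← sum_mul, sum_Icc_eq_sum_powerset_sdiff hst]
    have hsign : ∀ u ∈ (t \ s).powerset, (-1 : ℝ) ^ #((s ∪ u) \ s) = (-1) ^ #u := fun u hu => by
      rw [union_sdiff_left, (disjoint_sdiff_self_left.mono_left (mem_powerset.1 hu)).sdiff_eq_left]
    have hiff : t \ s = ∅ ↔ s = t :=
      sdiff_eq_empty_iff_subset.trans ⟨hst.antisymm, fun h => h ▸ subset_rfl⟩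
    rw [sum_congr rfl hsign, sum_powerset_neg_one_pow_card_real]
    simp only [hiff, ite_mul, one_mul, zero_mul]
  · rw [intervalMobius, Icc_eq_empty (by simpa using hst), sum_empty,
      if_neg (fun heq => hst heq.subset)]

theorem setMobius_comp_compl [Fintype V] (g : Finset V → ℝ) (B : Finset V) :
    setMobius (fun A => g Aᶜ) Bᶜ = intervalMobius g B univ := by
  refine sum_nbij' compl compl (fun D hD => by simpa [subset_compl_comm] using hD)
    (fun D hD => by simpa [subset_compl_comm] using hD)
    (fun D _ => compl_compl D) (fun D _ => compl_compl D) (fun D _ => ?_)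
  rw [← compl_sdiff_compl, compl_compl]

end

section

variable {V : Type*} [Fintype V] [DecidableEq V]

theorem biMobius_sub (v w : Finset V × Finset V → ℝ) (A A' : Finset V) :
    biMobius (v - w) A A' = biMobius v A A' - biMobius w A A' := by
  simp only [biMobius, Pi.sub_apply, mul_sub, sum_sub_distrib]

theorem biMobius_mul (f g : Finset V → ℝ) (A A' : Finset V) :
    biMobius (fun p => f p.1 * g p.2) A A' = setMobius f A * intervalMobius g A' Aᶜ := by
  rw [biMobius, setMobius, intervalMobius, sum_mul_sum, ← Icc_eq_filter_powerset]
  refine sum_congr rfl fun B _ => sum_congr rfl fun B' _ => ?_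
  ring

theorem biMobius_fst_sub_snd (f g : Finset V → ℝ) (A A' : Finset V) :
    biMobius (fun p => f p.1 - g p.2) A A' =
      (if A' = Aᶜ then setMobius f A else 0) - (if A = ∅ then intervalMobius g A' Aᶜ else 0) := by
  have hfg : (fun p : Finset V × Finset V => f p.1 - g p.2) =
      (fun p => f p.1 * (fun _ => (1 : ℝ)) p.2) - (fun p => (fun _ => (1 : ℝ)) p.1 * g p.2) := by
    funext p; simp
  rw [hfg, biMobius_sub, biMobius_mul f (fun _ => 1), biMobius_mul (fun _ => 1) g,
    intervalMobius_const, setMobius_const]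
  split_ifs <;> ring

end

theorem stmt_12_general (V : Type*) [Fintype V] [DecidableEq V]
    (ν₁ ν₂ : Finset V → ℝ)
    (h₁0 : ν₁ ∅ = 0)
    (v : Finset V × Finset V → ℝ) (hv : ∀ p, v p = ν₁ p.1 - ν₂ p.2) :
    (∀ A : Finset V, A.Nonempty → biMobius v A Aᶜ = setMobius ν₁ A) ∧
    (∀ B : Finset V, B ≠ univ →
      biMobius v ∅ B = setMobius (fun A => ν₂ univ - ν₂ Aᶜ) Bᶜ) ∧
    (biMobius v ∅ univ = -ν₂ univ) ∧
    (∀ A B : Finset V, Disjoint A B → A ≠ ∅ → B ≠ Aᶜ → biMobius v A B = 0) := by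
  obtain rfl : v = fun p => ν₁ p.1 - ν₂ p.2 := funext hv
  simp only [biMobius_fst_sub_snd, compl_empty, if_true]
  refine ⟨fun A hA => ?_, fun B hB => ?_, ?_, fun A B _ hA hB => ?_⟩
  · rw [if_neg hA.ne_empty, sub_zero]
  · rw [if_neg hB, setMobius_sub, setMobius_const, if_neg ((compl_eq_empty_iff B).not.2 hB),
      setMobius_comp_compl]
  · rw [setMobius_empty, intervalMobius_self, h₁0, zero_sub]
  · rw [if_neg hB, if_neg hA, sub_zero]

/-- Möbius transform of a CPT-type bi-capacity v(A,B) = ν₁(A) - ν₂(B). -/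
theorem stmt_12 (V : Type*) [Fintype V] [DecidableEq V]
    (ν₁ ν₂ : Finset V → ℝ)
    (h₁0 : ν₁ ∅ = 0) (h₂0 : ν₂ ∅ = 0)
    (h₁mono : ∀ A B : Finset V, A ⊆ B → ν₁ A ≤ ν₁ B)
    (h₂mono : ∀ A B : Finset V, A ⊆ B → ν₂ A ≤ ν₂ B)
    (h₁N : ν₁ univ = 1) (h₂N : ν₂ univ = 1)
    (v : Finset V × Finset V → ℝ) (hv : ∀ p, v p = ν₁ p.1 - ν₂ p.2) :
    (∀ A : Finset V, A.Nonempty → biMobius v A Aᶜ = setMobius ν₁ A) ∧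
    (∀ B : Finset V, B ≠ univ →
      biMobius v ∅ B = setMobius (fun A => ν₂ univ - ν₂ Aᶜ) Bᶜ) ∧
    (biMobius v ∅ univ = -ν₂ univ) ∧
    (∀ A B : Finset V, Disjoint A B → A ≠ ∅ → B ≠ Aᶜ → biMobius v A B = 0) :=
  stmt_12_general V ν₁ ν₂ h₁0 v hv
end

section
/- For integers 0 ≤ k < n, ∑_{i=0}^{k} (n-i-1)!·k! / (n!·(k-i)!) = 1/(n-k). -/
/-!
Write `n = k + m + 1` and substitute `j = k - i`. The `i`-th term becomes
`k! / n! * (j + m)! / j! = k! m! / n! * C(j + m, m)`, so the hockey-stick identity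
`∑_{j ≤ k} C(j + m, m) = C(n, m + 1)` collapses the sum to `m! / (m + 1)! = 1 / (n - k)`.
-/

open Finset Nat

lemma factorial_add_div_factorial (j m : ℕ) :
    ((j + m)! / j ! : ℚ) = (j + m).choose m * m ! := by
  rw [← add_choose_mul_factorial_mul_factorial j m]
  push_cast
  field_simp

lemma sum_range_factorial_add_div_factorial (k m : ℕ) :
    ∑ j ∈ range (k + 1), ((j + m)! / j ! : ℚ) = (k + m + 1)! / (k ! * (m + 1)) := by
  simp_rw [factorial_add_div_factorial, ← sum_mul]
  rw [← Nat.cast_sum, sum_range_add_choose, eq_div_iff (by positivity),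
    add_assoc, ← add_choose_mul_factorial_mul_factorial k (m + 1)]
  push_cast [factorial_succ]
  ring

/-- for 0 ≤ k < n, ∑_{i=0}^{k} (n-i-1)!·k!/(n!·(k-i)!) = 1/(n-k). -/
theorem stmt_18 (n k : ℕ) (h : k < n) :
    ∑ i ∈ Finset.range (k + 1),
        ((Nat.factorial (n - i - 1) * Nat.factorial k : ℚ) /
          (Nat.factorial n * Nat.factorial (k - i))) =
      1 / ((n : ℚ) - (k : ℚ)) := by
  obtain ⟨m, rfl⟩ := Nat.exists_eq_add_of_lt h
  have reindex : ∑ i ∈ range (k + 1),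
      ((k + m + 1 - i - 1)! * k ! : ℚ) / ((k + m + 1)! * (k - i)!) =
        (k ! / (k + m + 1)! : ℚ) * ∑ j ∈ range (k + 1), ((j + m)! / j ! : ℚ) := by
    rw [mul_sum, ← sum_range_reflect]
    refine sum_congr rfl fun i hi => ?_
    have hik : i ≤ k := Nat.lt_succ_iff.mp (mem_range.mp hi)
    rw [show k + m + 1 - (k + 1 - 1 - i) - 1 = i + m by omega,
      show k - (k + 1 - 1 - i) = i by omega]
    ring
  rw [reindex, sum_range_factorial_add_div_factorial,
    show ((k + m + 1 : ℕ) : ℚ) - k = m + 1 by push_cast; ring]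
  field_simp
end
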